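/- arXiv:2204.06600 — 3 statements merged into one kernel-verified Lean document; each statement's English description precedes it below -/
import Mathlib

section
/- Let θ̃ : K → ℝ be a strictly positive function satisfying the reduced balance equations, and define x : ℕ^J × K → ℝ by x(n,k) := ξ̃(n)·θ̃(k). Then x satisfies the global balance equations and x is strictly positive (x(n,k) > 0 for all (n,k) ∈ ℕ^J × K). -/
open Finset

/-- `k + e_i`: add one unit in coordinate `i`. -/
def addE {J : ℕ} (k : Fin J → ℕ) (i : Fin J) : Fin J → ℕ :=
  Function.update k i (k i + 1)

/-- `k - e_i`: remove one unit in coordinate `i`. -/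
def subE {J : ℕ} (k : Fin J → ℕ) (i : Fin J) : Fin J → ℕ :=
  Function.update k i (k i - 1)

/-- The set `M(k)` of locations attaining the maximal difference `b_i - k_i`. -/
def Mset {J : ℕ} (b k : Fin J → ℕ) : Finset (Fin J) :=
  Finset.univ.filter (fun i => b i - k i = Finset.univ.sup (fun j => b j - k j))

/-- Routing probability `p_i(k)` (strict load balancing policy). -/
noncomputable def routeP {J : ℕ} (b k : Fin J → ℕ) (i : Fin J) : ℝ :=
  if i ∈ Mset b k then 1 / ((Mset b k).card : ℝ) else 0

/-- The inventory state space `K = {k : 0 ≤ k_j ≤ b_j}` as a `Finset`. -/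
def Kfin {J : ℕ} (b : Fin J → ℕ) : Finset (Fin J → ℕ) :=
  Fintype.piFinset fun j => Finset.range (b j + 1)

/-- The reduced balance equation at a single state `k`. -/
def RBEat {J : ℕ} (lam : Fin J → ℝ) (b : Fin J → ℕ) (ν : ℝ)
    (θ : (Fin J → ℕ) → ℝ) (k : Fin J → ℕ) : Prop :=
  θ k * ((∑ i ∈ Finset.univ.filter (fun i => 0 < k i), lam i)
      + ∑ i ∈ Finset.univ.filter (fun i => k i < b i), ν * routeP b k i)
    = (∑ i ∈ Finset.univ.filter (fun i => k i < b i), θ (addE k i) * lam i)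
      + ∑ i ∈ Finset.univ.filter (fun i => 0 < k i),
          θ (subE k i) * ν * routeP b (subE k i) i

/-- `θ` satisfies the reduced balance equations (at every `k ∈ K`). -/
def ReducedBalance {J : ℕ} (lam : Fin J → ℝ) (b : Fin J → ℕ) (ν : ℝ)
    (θ : (Fin J → ℕ) → ℝ) : Prop :=
  ∀ k : Fin J → ℕ, (∀ j, k j ≤ b j) → RBEat lam b ν θ k

/-- The global balance equation at a single state `(n, k)`. -/
def GBEat {J : ℕ} (lam : Fin J → ℝ) (b : Fin J → ℕ) (μ : Fin J → ℕ → ℝ) (ν : ℝ)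
    (x : (Fin J → ℕ) → (Fin J → ℕ) → ℝ) (n k : Fin J → ℕ) : Prop :=
  x n k * ((∑ i ∈ Finset.univ.filter (fun i => 0 < k i), lam i)
      + (∑ i ∈ Finset.univ.filter (fun i => 0 < n i ∧ 0 < k i), μ i (n i))
      + ∑ i ∈ Finset.univ.filter (fun i => k i < b i), ν * routeP b k i)
    = (∑ i ∈ Finset.univ.filter (fun i => 0 < n i ∧ 0 < k i), x (subE n i) k * lam i)
      + (∑ i ∈ Finset.univ.filter (fun i => k i < b i),
          x (addE n i) (addE k i) * μ i (n i + 1))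
      + ∑ i ∈ Finset.univ.filter (fun i => 0 < k i),
          x n (subE k i) * ν * routeP b (subE k i) i

/-- `x` satisfies the global balance equations (at every `(n,k) ∈ ℕ^J × K`). -/
def GlobalBalance {J : ℕ} (lam : Fin J → ℝ) (b : Fin J → ℕ) (μ : Fin J → ℕ → ℝ)
    (ν : ℝ) (x : (Fin J → ℕ) → (Fin J → ℕ) → ℝ) : Prop :=
  ∀ n k : Fin J → ℕ, (∀ j, k j ≤ b j) → GBEat lam b μ ν x n k

/-- `ξ̃_j(n) = ∏_{ℓ=1}^n λ_j / μ_j(ℓ)`. -/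
noncomputable def xiT {J : ℕ} (lam : Fin J → ℝ) (μ : Fin J → ℕ → ℝ)
    (j : Fin J) (n : ℕ) : ℝ :=
  ∏ l ∈ Finset.Icc 1 n, lam j / μ j l

/-- `ξ̃(n) = ∏_j ξ̃_j(n_j)`. -/
noncomputable def xiTvec {J : ℕ} (lam : Fin J → ℝ) (μ : Fin J → ℕ → ℝ)
    (n : Fin J → ℕ) : ℝ :=
  ∏ j, xiT lam μ j (n j)

/-- The transition rates `q_red` of the reduced (inventory-replenishment) process. -/
noncomputable def qred {J : ℕ} (lam : Fin J → ℝ) (b : Fin J → ℕ) (ν : ℝ)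
    (k k' : Fin J → ℕ) : ℝ :=
  (∑ i : Fin J, (if 0 < k i ∧ k' = subE k i then lam i else 0))
    + ∑ i : Fin J, (if k i < b i ∧ k' = addE k i then ν * routeP b k i else 0)

/-- The candidate stationary measure for base stock levels all equal to one. -/
noncomputable def thetaOne {J : ℕ} (lam : Fin J → ℝ) (ν : ℝ)
    (k : Fin J → ℕ) : ℝ :=
  (∏ l ∈ Finset.range (∑ j, k j), 1 / ((J : ℝ) - (l : ℝ)))
    * (∏ j, (1 / lam j) ^ (k j)) * (1 / ν) ^ (J - ∑ j, k j)

lemma xiT_pos {J : ℕ} (lam : Fin J → ℝ) (hlam : ∀ j, 0 < lam j)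
    (μ : Fin J → ℕ → ℝ) (hμ : ∀ j n, 1 ≤ n → 0 < μ j n) (j : Fin J) (n : ℕ) :
    0 < xiT lam μ j n :=
  Finset.prod_pos fun l hl => div_pos (hlam j) (hμ j l (Finset.mem_Icc.mp hl).1)

lemma xiTvec_pos {J : ℕ} (lam : Fin J → ℝ) (hlam : ∀ j, 0 < lam j)
    (μ : Fin J → ℕ → ℝ) (hμ : ∀ j n, 1 ≤ n → 0 < μ j n) (n : Fin J → ℕ) :
    0 < xiTvec lam μ n :=
  Finset.prod_pos fun j _ => xiT_pos lam hlam μ hμ j (n j)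

lemma xiT_succ {J : ℕ} (lam : Fin J → ℝ) (μ : Fin J → ℕ → ℝ) (j : Fin J) (n : ℕ) :
    xiT lam μ j (n + 1) = xiT lam μ j n * (lam j / μ j (n + 1)) := by
  unfold xiT
  rw [Finset.prod_Icc_succ_top (Nat.le_add_left 1 n)]

lemma xiTvec_update {J : ℕ} (lam : Fin J → ℝ) (μ : Fin J → ℕ → ℝ)
    (n : Fin J → ℕ) (i : Fin J) (a : ℕ) :
    xiTvec lam μ (Function.update n i a)
      = xiT lam μ i a * ∏ j ∈ Finset.univ.erase i, xiT lam μ j (n j) := by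
  unfold xiTvec
  rw [← Finset.mul_prod_erase _ _ (Finset.mem_univ i), Function.update_self]
  congr 1
  exact Finset.prod_congr rfl fun j hj => by
    rw [Function.update_of_ne (Finset.ne_of_mem_erase hj)]

lemma xiTvec_addE {J : ℕ} (lam : Fin J → ℝ)
    (μ : Fin J → ℕ → ℝ) (hμ : ∀ j n, 1 ≤ n → 0 < μ j n)
    (n : Fin J → ℕ) (i : Fin J) :
    xiTvec lam μ (addE n i) * μ i (n i + 1) = xiTvec lam μ n * lam i := by
  have h := xiTvec_update lam μ n i (n i + 1)
  have h2 := xiTvec_update lam μ n i (n i)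
  rw [Function.update_eq_self] at h2
  rw [addE, h, xiT_succ, h2]
  have hne : μ i (n i + 1) ≠ 0 := (hμ i (n i + 1) (Nat.le_add_left 1 _)).ne'
  field_simp

lemma xiTvec_subE {J : ℕ} (lam : Fin J → ℝ)
    (μ : Fin J → ℕ → ℝ) (hμ : ∀ j n, 1 ≤ n → 0 < μ j n)
    (n : Fin J → ℕ) (i : Fin J) (hn : 0 < n i) :
    xiTvec lam μ (subE n i) * lam i = xiTvec lam μ n * μ i (n i) := by
  obtain ⟨m, hm⟩ : ∃ m, n i = m + 1 := ⟨n i - 1, (Nat.succ_pred_eq_of_pos hn).symm⟩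
  have h := xiTvec_update lam μ n i (n i - 1)
  have h2 := xiTvec_update lam μ n i (n i)
  rw [Function.update_eq_self] at h2
  rw [subE, h, h2, hm]
  simp only [Nat.add_sub_cancel]
  rw [xiT_succ]
  have hne : μ i (m + 1) ≠ 0 := (hμ i (m + 1) (Nat.le_add_left 1 _)).ne'
  field_simp

/-- if `θ̃` is a strictly positive solution of the reduced balance
equations, then `x(n,k) := ξ̃(n)·θ̃(k)` satisfies the global balance equations and
is strictly positive. -/
theorem product_form_solves_global_balance
    (J : ℕ) (hJ : 1 < J) (lam : Fin J → ℝ) (hlam : ∀ j, 0 < lam j)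
    (b : Fin J → ℕ) (hb : ∀ j, 1 ≤ b j)
    (μ : Fin J → ℕ → ℝ) (hμ : ∀ j n, 1 ≤ n → 0 < μ j n)
    (ν : ℝ) (hν : 0 < ν)
    (θ : (Fin J → ℕ) → ℝ) (hθpos : ∀ k, (∀ j, k j ≤ b j) → 0 < θ k)
    (hθbal : ReducedBalance lam b ν θ)
    (x : (Fin J → ℕ) → (Fin J → ℕ) → ℝ)
    (hx : ∀ n k, x n k = xiTvec lam μ n * θ k) :
    GlobalBalance lam b μ ν x ∧
      ∀ n k : Fin J → ℕ, (∀ j, k j ≤ b j) → 0 < x n k := by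
  constructor
  · intro n k hk
    unfold GBEat
    have h1 : ∑ i ∈ Finset.univ.filter (fun i => 0 < n i ∧ 0 < k i),
        x (subE n i) k * lam i
        = (∑ i ∈ Finset.univ.filter (fun i => 0 < n i ∧ 0 < k i), μ i (n i))
            * (xiTvec lam μ n * θ k) := by
      rw [Finset.sum_mul]
      refine Finset.sum_congr rfl fun i hi => ?_
      obtain ⟨hni, _⟩ := (Finset.mem_filter.mp hi).2
      rw [hx]
      calc xiTvec lam μ (subE n i) * θ k * lam i
          = (xiTvec lam μ (subE n i) * lam i) * θ k := by ring
        _ = (xiTvec lam μ n * μ i (n i)) * θ k := by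
            rw [xiTvec_subE lam μ hμ n i hni]
        _ = μ i (n i) * (xiTvec lam μ n * θ k) := by ring
    have h2 : ∑ i ∈ Finset.univ.filter (fun i => k i < b i),
        x (addE n i) (addE k i) * μ i (n i + 1)
        = xiTvec lam μ n
            * ∑ i ∈ Finset.univ.filter (fun i => k i < b i), θ (addE k i) * lam i := by
      rw [Finset.mul_sum]
      refine Finset.sum_congr rfl fun i hi => ?_
      rw [hx]
      calc xiTvec lam μ (addE n i) * θ (addE k i) * μ i (n i + 1)
          = (xiTvec lam μ (addE n i) * μ i (n i + 1)) * θ (addE k i) := by ring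
        _ = (xiTvec lam μ n * lam i) * θ (addE k i) := by
            rw [xiTvec_addE lam μ hμ n i]
        _ = xiTvec lam μ n * (θ (addE k i) * lam i) := by ring
    have h3 : ∑ i ∈ Finset.univ.filter (fun i => 0 < k i),
        x n (subE k i) * ν * routeP b (subE k i) i
        = xiTvec lam μ n
            * ∑ i ∈ Finset.univ.filter (fun i => 0 < k i),
                θ (subE k i) * ν * routeP b (subE k i) i := by
      rw [Finset.mul_sum]
      refine Finset.sum_congr rfl fun i _ => ?_
      rw [hx]; ring
    rw [hx, h1, h2, h3]
    have hbal := hθbal k hk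
    unfold RBEat at hbal
    linear_combination (xiTvec lam μ n) * hbal
  · intro n k hk
    rw [hx]
    exact mul_pos (xiTvec_pos lam hlam μ hμ n) (hθpos k hk)
end

section
/- Assume the locations are homogeneous: b_1 = ⋯ = b_J =: b and λ_1 = ⋯ = λ_J =: λ. Let θ : K → ℝ be nonnegative, satisfy the reduced balance equations, have total mass Σ_{k∈K} θ(k) = 1, and be permutation-symmetric: θ(k_{σ(1)},…,k_{σ(J)}) = θ(k_1,…,k_J) for every permutation σ of {1,…,J}. Then for every ℓ ∈ {1,…,b}: (Σ_{k∈K: k_1=ℓ} θ(k)) · λ = θ(ℓ−1, ℓ−1, …, ℓ−1) · ν/J + Σ_{i=1}^{J−1} (Σ_{k∈K: k_j=ℓ−1 for j=1,…,i and ℓ−1 < k_j ≤ b for j=i+1,…,J} θ(k)) · binom(J−1, i−1) · ν/i, where binom denotes the binomial coefficient. -/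
/-!
Summing the balance equations against a test function `g` gives the weak form
`∑ₖ θ(k) (Q g)(k) = 0` of stationarity, `Q` the generator of the inventory process. Taking for `g` the indicator of `{k₁ ≥ ℓ}` says that the
flow down across level `ℓ` of location 1 (demands at states with `k₁ = ℓ`) equals the flow up
(replenishments routed to location 1 from states with `k₁ = ℓ - 1`).

With equal base stocks, a replenishment goes to location 1 from such a state exactly when `ℓ - 1`
is the minimal inventory, with probability `1 / |S|`, `S` the set of locations at the minimum.
Grouping states by `S`, the symmetry of `θ` makes the mass of each group depend only on `|S|`,
and `binom(J - 1, i - 1)` of the sets `S` of size `i` contain location 1.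
-/

open Finset

section Shift

variable {J : ℕ} {b k : Fin J → ℕ} {i : Fin J}

lemma mem_Kfin : k ∈ Kfin b ↔ ∀ j, k j ≤ b j := by
  simp [Kfin, Fintype.mem_piFinset]

@[simp] lemma addE_self : addE k i i = k i + 1 := Function.update_self ..

@[simp] lemma subE_self : subE k i i = k i - 1 := Function.update_self ..

lemma addE_of_ne {j : Fin J} (h : j ≠ i) : addE k i j = k j := Function.update_of_ne h ..

lemma subE_of_ne {j : Fin J} (h : j ≠ i) : subE k i j = k j := Function.update_of_ne h ..

@[simp] lemma subE_addE : subE (addE k i) i = k := by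
  simp [subE, addE]

lemma addE_subE (h : 0 < k i) : addE (subE k i) i = k := by
  simp only [addE, subE, Function.update_idem, Function.update_self]
  rw [Nat.sub_add_cancel h, Function.update_eq_self]

lemma addE_mem_Kfin (hk : k ∈ Kfin b) (hi : k i < b i) : addE k i ∈ Kfin b := by
  rw [mem_Kfin] at hk ⊢
  intro j
  rcases eq_or_ne j i with rfl | hj
  · simpa using hi
  · simpa [addE_of_ne hj] using hk j

lemma subE_mem_Kfin (hk : k ∈ Kfin b) : subE k i ∈ Kfin b := by
  rw [mem_Kfin] at hk ⊢
  intro j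
  rcases eq_or_ne j i with rfl | hj
  · simpa using (Nat.sub_le _ _).trans (hk j)
  · simpa [subE_of_ne hj] using hk j

lemma sum_Kfin_shift {M : Type*} [AddCommMonoid M] (b : Fin J → ℕ)
    (F : (Fin J → ℕ) → Fin J → M) :
    ∑ k ∈ Kfin b, ∑ i with k i < b i, F k i = ∑ k ∈ Kfin b, ∑ i with 0 < k i, F (subE k i) i := by
  rw [sum_comm' (t' := univ) (s' := fun i => {k ∈ Kfin b | k i < b i}) (by simp),
    sum_comm' (t' := univ) (s' := fun i => {k ∈ Kfin b | 0 < k i}) (by simp)]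
  refine sum_congr rfl fun i _ => sum_nbij' (addE · i) (subE · i) ?_ ?_ ?_ ?_ ?_
  · intro k hk
    rw [mem_filter] at hk ⊢
    exact ⟨addE_mem_Kfin hk.1 hk.2, by simp⟩
  · intro k hk
    rw [mem_filter] at hk ⊢
    have := mem_Kfin.1 hk.1 i
    exact ⟨subE_mem_Kfin hk.1, by rw [subE_self]; omega⟩
  · intro k _; simp
  · intro k hk; exact addE_subE (mem_filter.1 hk).2
  · intro k _; simp

end Shift

namespace ReducedBalance

variable {J : ℕ} {lam : Fin J → ℝ} {b : Fin J → ℕ} {ν : ℝ} {θ : (Fin J → ℕ) → ℝ}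

theorem sum_mul_generator_eq_zero (h : ReducedBalance lam b ν θ) (g : (Fin J → ℕ) → ℝ) :
    ∑ k ∈ Kfin b, θ k * (∑ i with 0 < k i, lam i * (g (subE k i) - g k)
      + ∑ i with k i < b i, ν * routeP b k i * (g (addE k i) - g k)) = 0 := by
  have hbalance : ∑ k ∈ Kfin b, g k * (θ k * ((∑ i with 0 < k i, lam i)
        + ∑ i with k i < b i, ν * routeP b k i))
      = ∑ k ∈ Kfin b, g k * ((∑ i with k i < b i, θ (addE k i) * lam i)
        + ∑ i with 0 < k i, θ (subE k i) * ν * routeP b (subE k i) i) :=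
    sum_congr rfl fun k hk => by rw [h k (mem_Kfin.1 hk)]
  have harrivals : ∑ k ∈ Kfin b, ∑ i with k i < b i, g k * (θ (addE k i) * lam i)
      = ∑ k ∈ Kfin b, ∑ i with 0 < k i, θ k * (lam i * g (subE k i)) := by
    rw [sum_Kfin_shift]
    refine sum_congr rfl fun k _ => sum_congr rfl fun i hi => ?_
    rw [addE_subE (mem_filter.1 hi).2]
    ring
  have hsupplies :
      ∑ k ∈ Kfin b, ∑ i with 0 < k i, g k * (θ (subE k i) * ν * routeP b (subE k i) i)
      = ∑ k ∈ Kfin b, ∑ i with k i < b i, θ k * (ν * routeP b k i * g (addE k i)) := by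
    rw [sum_Kfin_shift]
    refine sum_congr rfl fun k _ => sum_congr rfl fun i hi => ?_
    rw [addE_subE (mem_filter.1 hi).2]
    ring
  simp only [mul_add, mul_sub, mul_sum, sum_add_distrib, sum_sub_distrib] at hbalance ⊢
  simp only [mul_comm, mul_left_comm] at hbalance harrivals hsupplies ⊢
  linear_combination -harrivals - hsupplies - hbalance

theorem level_crossing (h : ReducedBalance lam b ν θ) (i₀ : Fin J) {ℓ : ℕ} (hℓ : 1 ≤ ℓ)
    (hℓb : ℓ ≤ b i₀) :
    (∑ k ∈ Kfin b with k i₀ = ℓ, θ k) * lam i₀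
      = ∑ k ∈ Kfin b with k i₀ = ℓ - 1, θ k * (ν * routeP b k i₀) := by
  set g : (Fin J → ℕ) → ℝ := fun k => if ℓ ≤ k i₀ then 1 else 0
  have hdown : ∀ k, ∑ i with 0 < k i, lam i * (g (subE k i) - g k)
      = -if k i₀ = ℓ then lam i₀ else 0 := by
    intro k
    rw [sum_eq_single i₀]
    · simp only [g, subE_self]
      split_ifs <;> first | omega | ring
    · intro i _ hi
      simp [g, subE_of_ne (Ne.symm hi)]
    · intro hi
      simp_all [g]
  have hup : ∀ k, ∑ i with k i < b i, ν * routeP b k i * (g (addE k i) - g k)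
      = if k i₀ = ℓ - 1 then ν * routeP b k i₀ else 0 := by
    intro k
    rw [sum_eq_single i₀]
    · simp only [g, addE_self]
      split_ifs <;> first | omega | ring
    · intro i _ hi
      simp [g, addE_of_ne (Ne.symm hi)]
    · intro hi
      simp only [mem_filter, mem_univ, true_and, not_lt] at hi
      simp only [g, addE_self]
      split_ifs <;> first | omega | ring
  have hweak := h.sum_mul_generator_eq_zero g
  simp only [hdown, hup] at hweak
  rw [sum_filter, sum_filter, sum_mul, ← sub_eq_zero, ← sum_sub_distrib, ← neg_eq_zero,
    ← sum_neg_distrib]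
  exact (sum_congr rfl fun k _ => by split_ifs <;> first | omega | ring).trans hweak

end ReducedBalance

theorem Finset.sum_filter_mem_apply_card {α M : Type*} [Fintype α] [DecidableEq α]
    [AddCommMonoid M] (a : α) (f : ℕ → M) :
    ∑ S : Finset α with a ∈ S, f #S
      = ∑ i ∈ Icc 1 (Fintype.card α), (Fintype.card α - 1).choose (i - 1) • f i := by
  set s := univ.erase a
  have hs : insert a s = univ := insert_erase (mem_univ a)
  have hnotMem : ∀ t ∈ s.powerset, a ∉ t :=
    fun t ht ha => notMem_erase a univ (mem_powerset.1 ht ha)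
  have hcard : Fintype.card α = #s + 1 := by
    rw [← card_univ, ← hs, card_insert_of_notMem (notMem_erase a univ)]
  rw [hcard, Nat.add_sub_cancel, sum_filter, ← powerset_univ, ← hs,
    sum_powerset_insert (notMem_erase a univ), sum_eq_zero fun t ht => if_neg (hnotMem t ht),
    zero_add]
  calc ∑ t ∈ s.powerset, (if a ∈ insert a t then f #(insert a t) else 0)
      = ∑ t ∈ s.powerset, f (#t + 1) :=
        sum_congr rfl fun t ht => by
          rw [if_pos (mem_insert_self a t), card_insert_of_notMem (hnotMem t ht)]
    _ = ∑ i ∈ Icc 1 (#s + 1), (#s).choose (i - 1) • f i := by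
        rw [sum_powerset_apply_card (fun m => f (m + 1)), ← Ico_add_one_right_eq_Icc,
          sum_Ico_eq_sum_range]
        simp [add_comm]

section Homogeneous

variable {J bv c : ℕ} {k : Fin J → ℕ} {θ : (Fin J → ℕ) → ℝ}

lemma mem_Mset_const (hk : ∀ j, k j ≤ bv) {i : Fin J} :
    i ∈ Mset (fun _ => bv) k ↔ ∀ j, k i ≤ k j := by
  have hle : ∀ j, bv - k j ≤ univ.sup fun j => bv - k j :=
    fun j => le_sup (f := fun j => bv - k j) (mem_univ j)
  simp only [Mset, mem_filter, mem_univ, true_and]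
  refine ⟨fun h j => ?_, fun h => le_antisymm (hle i) (Finset.sup_le fun j _ => ?_)⟩
  · have := hle j; have := hk i; have := hk j; omega
  · have := h j; omega

lemma routeP_const (hk : ∀ j, k j ≤ bv) (i : Fin J) :
    routeP (fun _ => bv) k i = if ∀ j, k i ≤ k j then 1 / (#{j | k j = k i} : ℝ) else 0 := by
  simp only [routeP, mem_Mset_const hk]
  split_ifs with hmin
  · congr 3
    ext j
    rw [mem_Mset_const hk, mem_filter]
    exact ⟨fun h => ⟨mem_univ j, le_antisymm (h i) (hmin j)⟩, fun h j' => h.2 ▸ hmin j'⟩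
  · rfl

def levelBlock (bv c : ℕ) (S : Finset (Fin J)) : Finset (Fin J → ℕ) :=
  {k ∈ Kfin (fun _ => bv) | (∀ j, c ≤ k j) ∧ ({j | k j = c} : Finset (Fin J)) = S}

lemma mem_levelBlock {S : Finset (Fin J)} :
    k ∈ levelBlock bv c S ↔ ∀ j, k j ≤ bv ∧ c ≤ k j ∧ (k j = c ↔ j ∈ S) := by
  simp only [levelBlock, mem_filter, mem_Kfin, Finset.ext_iff, mem_univ, true_and, forall_and]

open scoped Pointwise in
lemma sum_levelBlock_eq_of_card_eq
    (hsym : ∀ (σ : Equiv.Perm (Fin J)) (k : Fin J → ℕ), θ (fun j => k (σ j)) = θ k)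
    {S T : Finset (Fin J)} (h : #S = #T) :
    ∑ k ∈ levelBlock bv c S, θ k = ∑ k ∈ levelBlock bv c T, θ k := by
  have := Set.powersetCard.isPretransitive (α := Fin J) (n := #S)
  obtain ⟨σ, hσ⟩ := MulAction.exists_smul_eq (Equiv.Perm (Fin J))
    (⟨S, rfl⟩ : Set.powersetCard (Fin J) #S) ⟨T, h.symm⟩
  have hσ' : σ • S = T := by simpa using congrArg Subtype.val hσ
  have hST : ∀ j, σ.symm j ∈ S ↔ j ∈ T := fun j => by
    rw [← hσ', ← Finset.inv_smul_mem_iff]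
    rfl
  refine sum_nbij' (fun k j => k (σ.symm j)) (fun k j => k (σ j)) ?_ ?_ ?_ ?_ ?_
  · intro k hk
    simp only [mem_levelBlock] at hk ⊢
    exact fun j => by simpa only [hST] using hk (σ.symm j)
  · intro k hk
    simp only [mem_levelBlock] at hk ⊢
    intro j
    simpa [← hST] using hk (σ j)
  · intro k _; simp
  · intro k _; simp
  · intro k _; exact (hsym σ.symm k).symm

lemma levelBlock_univ (hc : c ≤ bv) :
    levelBlock bv c (univ : Finset (Fin J)) = {fun _ => c} := by
  ext k
  simp only [mem_levelBlock, mem_univ, iff_true, mem_singleton, funext_iff]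
  exact ⟨fun h j => (h j).2.2, fun h j => by simp [h j, hc]⟩

lemma levelBlock_filter_lt (i : ℕ) :
    levelBlock bv c ({j | (j : ℕ) < i} : Finset (Fin J))
      = {k ∈ Kfin (fun _ => bv) | (∀ j : Fin J, (j : ℕ) < i → k j = c)
          ∧ ∀ j : Fin J, i ≤ (j : ℕ) → c < k j ∧ k j ≤ bv} := by
  ext k
  simp only [mem_levelBlock, mem_filter, mem_Kfin, mem_univ, true_and, ← forall_and]
  refine forall_congr' fun j => ?_
  by_cases hj : (j : ℕ) < i
  · simp only [hj, iff_true, true_implies]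
    omega
  · simp only [hj, iff_false, false_implies, true_and]
    omega

theorem sum_mul_routeP_const_eq_sum_levelBlock (i₀ : Fin J) (ν : ℝ) :
    ∑ k ∈ Kfin (fun _ => bv) with k i₀ = c, θ k * (ν * routeP (fun _ => bv) k i₀)
      = ∑ S : Finset (Fin J) with i₀ ∈ S, (∑ k ∈ levelBlock bv c S, θ k) * (ν / #S) := by
  set Z : (Fin J → ℕ) → Finset (Fin J) := fun k => {j | k j = c}
  calc ∑ k ∈ Kfin (fun _ => bv) with k i₀ = c, θ k * (ν * routeP (fun _ => bv) k i₀)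
      = ∑ k ∈ Kfin (fun _ => bv) with ∀ j, c ≤ k j,
          θ k * (if i₀ ∈ Z k then ν / #(Z k) else 0) := by
        rw [sum_filter, sum_filter]
        refine sum_congr rfl fun k hk => ?_
        rw [routeP_const (mem_Kfin.1 hk)]
        by_cases hk₀ : k i₀ = c
        · simp [Z, hk₀, div_eq_mul_inv]
        · simp [Z, hk₀]
    _ = ∑ S, (∑ k ∈ levelBlock bv c S, θ k) * (if i₀ ∈ S then ν / #S else 0) := by
        rw [← sum_fiberwise _ Z]
        refine sum_congr rfl fun S _ => ?_
        rw [levelBlock, ← filter_filter, sum_mul]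
        exact sum_congr rfl fun k hk => by rw [show Z k = S from (mem_filter.1 hk).2]
    _ = _ := by simp only [mul_ite, mul_zero, sum_filter]

theorem sum_mul_routeP_const_eq_sum_choose
    (hsym : ∀ (σ : Equiv.Perm (Fin J)) (k : Fin J → ℕ), θ (fun j => k (σ j)) = θ k)
    (i₀ : Fin J) (ν : ℝ) :
    ∑ k ∈ Kfin (fun _ => bv) with k i₀ = c, θ k * (ν * routeP (fun _ => bv) k i₀)
      = ∑ i ∈ Icc 1 J, (∑ k ∈ levelBlock bv c ({j | (j : ℕ) < i} : Finset (Fin J)), θ k)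
          * ((J - 1).choose (i - 1) : ℝ) * (ν / i) := by
  have hcard : ∀ S : Finset (Fin J), #S = #({j | (j : ℕ) < #S} : Finset (Fin J)) := fun S => by
    rw [Fin.card_filter_val_lt, min_eq_right (card_le_univ S |>.trans_eq (Fintype.card_fin J))]
  rw [sum_mul_routeP_const_eq_sum_levelBlock,
    sum_congr rfl fun S _ => by rw [sum_levelBlock_eq_of_card_eq hsym (hcard S)],
    sum_filter_mem_apply_card i₀ fun i =>
      (∑ k ∈ levelBlock bv c ({j | (j : ℕ) < i} : Finset (Fin J)), θ k) * (ν / i),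
    Fintype.card_fin]
  refine sum_congr rfl fun i _ => ?_
  rw [nsmul_eq_mul]
  ring

end Homogeneous

/-- marginal balance for the inventory at location 1 in the
homogeneous case. -/
theorem homogeneous_marginal_inventory_balance
    (J : ℕ) (hJ : 1 < J) (lamv : ℝ)
    (bv : ℕ) (ν : ℝ)
    (θ : (Fin J → ℕ) → ℝ)
    (hbal : ReducedBalance (fun _ => lamv) (fun _ => bv) ν θ)
    (hsym : ∀ (σ : Equiv.Perm (Fin J)) (k : Fin J → ℕ),
      θ (fun j => k (σ j)) = θ k) :
    ∀ ℓ : ℕ, 1 ≤ ℓ → ℓ ≤ bv →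
      (∑ k ∈ (Kfin (fun _ : Fin J => bv)).filter
          (fun k => k ⟨0, by omega⟩ = ℓ), θ k) * lamv
        = θ (fun _ => ℓ - 1) * (ν / (J : ℝ))
          + ∑ i ∈ Finset.Icc 1 (J - 1),
              (∑ k ∈ (Kfin (fun _ : Fin J => bv)).filter
                  (fun k => (∀ j : Fin J, (j : ℕ) < i → k j = ℓ - 1)
                    ∧ ∀ j : Fin J, i ≤ (j : ℕ) → ℓ - 1 < k j ∧ k j ≤ bv), θ k)
                * ((J - 1).choose (i - 1) : ℝ) * (ν / (i : ℝ)) := by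
  intro ℓ hℓ hℓb
  have hsplit (f : ℕ → ℝ) : ∑ i ∈ Icc 1 J, f i = ∑ i ∈ Icc 1 (J - 1), f i + f J := by
    simpa only [Nat.sub_add_cancel hJ.le] using sum_Icc_succ_top (show 1 ≤ J - 1 + 1 by omega) f
  have hfull : ({j | (j : ℕ) < J} : Finset (Fin J)) = univ :=
    filter_true_of_mem fun j _ => j.is_lt
  refine (hbal.level_crossing _ hℓ hℓb).trans ?_
  rw [sum_mul_routeP_const_eq_sum_choose hsym, hsplit, hfull, levelBlock_univ (by omega),
    sum_singleton, Nat.choose_self, Nat.cast_one, mul_one, add_comm]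
  simp only [levelBlock_filter_lt]
end

section
/- Assume J = 2 and b_1 ≥ b_2. Let θ : K → ℝ be nonnegative, satisfy the reduced balance equations, and have total mass Σ_{k∈K} θ(k) = 1; write θ(k_1,k_2) for its values. Then: (Σ_{k_2=0}^{b_2} θ(b_1, k_2)) · λ_1 = θ(b_1 − 1, b_2 − 1) · ν/2 + θ(b_1 − 1, b_2) · ν. -/
open Finset

lemma sup_two (f : Fin 2 → ℕ) : Finset.univ.sup f = max (f 0) (f 1) := by
  rw [show (Finset.univ : Finset (Fin 2)) = {0, 1} by decide]
  simp [Finset.sup_insert]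

lemma Mset_two (b k : Fin 2 → ℕ) :
    Mset b k = if b 1 - k 1 < b 0 - k 0 then {0}
      else if b 0 - k 0 < b 1 - k 1 then {1} else {0, 1} := by
  unfold Mset
  ext i
  fin_cases i <;> simp [sup_two] <;> split_ifs <;> simp <;> omega

lemma routeP0_gt (b k : Fin 2 → ℕ) (h : b 1 - k 1 < b 0 - k 0) : routeP b k 0 = 1 := by
  simp [routeP, Mset_two, h]
lemma routeP0_eq (b k : Fin 2 → ℕ) (h : b 0 - k 0 = b 1 - k 1) : routeP b k 0 = 1/2 := by
  have h1 : ¬ b 1 - k 1 < b 0 - k 0 := by omega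
  have h2 : ¬ b 0 - k 0 < b 1 - k 1 := by omega
  rw [routeP, Mset_two, if_neg h1, if_neg h2]
  norm_num
lemma routeP0_lt (b k : Fin 2 → ℕ) (h : b 0 - k 0 < b 1 - k 1) : routeP b k 0 = 0 := by
  have h1 : ¬ b 1 - k 1 < b 0 - k 0 := by omega
  rw [routeP, Mset_two, if_neg h1, if_pos h]
  simp
lemma routeP1_gt (b k : Fin 2 → ℕ) (h : b 0 - k 0 < b 1 - k 1) : routeP b k 1 = 1 := by
  have h1 : ¬ b 1 - k 1 < b 0 - k 0 := by omega
  rw [routeP, Mset_two, if_neg h1, if_pos h]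
  simp

lemma addE1 (a c : ℕ) : addE ![a,c] 1 = ![a, c+1] := by
  funext i; fin_cases i <;> simp [addE, Function.update]
lemma subE0 (a c : ℕ) : subE ![a,c] 0 = ![a-1, c] := by
  funext i; fin_cases i <;> simp [subE, Function.update]
lemma subE1 (a c : ℕ) : subE ![a,c] 1 = ![a, c-1] := by
  funext i; fin_cases i <;> simp [subE, Function.update]

lemma step (lam : Fin 2 → ℝ) (b : Fin 2 → ℕ) (ν : ℝ) (θ : (Fin 2 → ℕ) → ℝ)
    (hb0 : 1 ≤ b 0) (hbal : ReducedBalance lam b ν θ) (k₂ : ℕ) (hk : k₂ ≤ b 1) :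
    θ ![b 0, k₂] * lam 0
      + (if 0 < k₂ then θ ![b 0, k₂] * lam 1 else 0)
      + (if k₂ < b 1 then θ ![b 0, k₂] * ν else 0)
    = (if k₂ < b 1 then θ ![b 0, k₂ + 1] * lam 1 else 0)
      + (if 0 < k₂ then θ ![b 0, k₂ - 1] * ν else 0)
      + θ ![b 0 - 1, k₂] * ν * routeP b ![b 0 - 1, k₂] 0 := by
  have hk' : ∀ j, (![b 0, k₂] : Fin 2 → ℕ) j ≤ b j := by
    intro j; fin_cases j <;> simp [hk]
  have h := hbal ![b 0, k₂] hk'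
  unfold RBEat at h
  rw [Finset.sum_filter, Finset.sum_filter, Finset.sum_filter, Finset.sum_filter] at h
  simp only [Fin.sum_univ_two, Matrix.cons_val_zero, Matrix.cons_val_one,
    Matrix.head_cons, lt_irrefl, if_false, show 0 < b 0 from hb0, if_true,
    addE1, subE0, subE1] at h
  by_cases hpos : 0 < k₂ <;> by_cases hlt : k₂ < b 1 <;>
    simp only [hpos, hlt, if_true, if_false] at h ⊢
  · rw [routeP1_gt b ![b 0, k₂] (by simp; omega),
      routeP1_gt b ![b 0, k₂ - 1] (by simp; omega)] at h
    linarith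
  · rw [routeP1_gt b ![b 0, k₂ - 1] (by simp; omega)] at h
    linarith
  · rw [routeP1_gt b ![b 0, k₂] (by simp; omega)] at h
    linarith
  · linarith

/-- two heterogeneous locations, cut balance for `ℓ₁ = b₁`. -/
theorem two_locations_marginal_Y1_top
    (lam : Fin 2 → ℝ) (hlam : ∀ j, 0 < lam j)
    (b : Fin 2 → ℕ) (hb : ∀ j, 1 ≤ b j) (hb12 : b 1 ≤ b 0)
    (ν : ℝ) (hν : 0 < ν)
    (θ : (Fin 2 → ℕ) → ℝ)
    (hθnn : ∀ k : Fin 2 → ℕ, (∀ j, k j ≤ b j) → 0 ≤ θ k)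
    (hbal : ReducedBalance lam b ν θ)
    (hmass : ∑ k ∈ Kfin b, θ k = 1) :
    (∑ k₂ ∈ Finset.range (b 1 + 1), θ ![b 0, k₂]) * lam 0
      = θ ![b 0 - 1, b 1 - 1] * (ν / 2) + θ ![b 0 - 1, b 1] * ν := by
  have hb0 : 1 ≤ b 0 := hb 0
  have hb1 : 1 ≤ b 1 := hb 1
  have hsum := Finset.sum_congr rfl
    (fun k₂ (hk : k₂ ∈ Finset.range (b 1 + 1)) =>
      step lam b ν θ hb0 hbal k₂ (by simpa using Nat.lt_succ_iff.mp (Finset.mem_range.mp hk)))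
  rw [Finset.sum_add_distrib, Finset.sum_add_distrib, Finset.sum_add_distrib,
    Finset.sum_add_distrib] at hsum
  -- identify telescoping pieces
  have hB : (∑ k₂ ∈ Finset.range (b 1 + 1), if 0 < k₂ then θ ![b 0, k₂] * lam 1 else 0)
      = ∑ k₂ ∈ Finset.range (b 1), θ ![b 0, k₂ + 1] * lam 1 := by
    rw [Finset.sum_range_succ']
    simp
  have hB' : (∑ k₂ ∈ Finset.range (b 1 + 1), if k₂ < b 1 then θ ![b 0, k₂ + 1] * lam 1 else 0)
      = ∑ k₂ ∈ Finset.range (b 1), θ ![b 0, k₂ + 1] * lam 1 := by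
    rw [Finset.sum_range_succ]
    simp only [lt_irrefl, if_false, add_zero]
    exact Finset.sum_congr rfl (fun k hk => if_pos (Finset.mem_range.mp hk))
  have hC : (∑ k₂ ∈ Finset.range (b 1 + 1), if k₂ < b 1 then θ ![b 0, k₂] * ν else 0)
      = ∑ k₂ ∈ Finset.range (b 1), θ ![b 0, k₂] * ν := by
    rw [Finset.sum_range_succ]
    simp only [lt_irrefl, if_false, add_zero]
    exact Finset.sum_congr rfl (fun k hk => if_pos (Finset.mem_range.mp hk))
  have hC' : (∑ k₂ ∈ Finset.range (b 1 + 1), if 0 < k₂ then θ ![b 0, k₂ - 1] * ν else 0)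
      = ∑ k₂ ∈ Finset.range (b 1), θ ![b 0, k₂] * ν := by
    rw [Finset.sum_range_succ']
    simp
  have hD : (∑ k₂ ∈ Finset.range (b 1 + 1), θ ![b 0 - 1, k₂] * ν * routeP b ![b 0 - 1, k₂] 0)
      = θ ![b 0 - 1, b 1 - 1] * (ν / 2) + θ ![b 0 - 1, b 1] * ν := by
    have hn : b 1 = (b 1 - 1) + 1 := by omega
    rw [Finset.sum_range_succ, hn, Finset.sum_range_succ, ← hn]
    have e1 : routeP b ![b 0 - 1, b 1] 0 = 1 :=
      routeP0_gt b ![b 0 - 1, b 1] (by simp; omega)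
    have e2 : routeP b ![b 0 - 1, b 1 - 1] 0 = 1/2 :=
      routeP0_eq b ![b 0 - 1, b 1 - 1] (by simp; omega)
    have e3 : ∀ k ∈ Finset.range (b 1 - 1),
        θ ![b 0 - 1, k] * ν * routeP b ![b 0 - 1, k] 0 = 0 := by
      intro k hk
      rw [routeP0_lt b ![b 0 - 1, k] (by simp; simp at hk; omega), mul_zero]
    rw [Finset.sum_eq_zero e3, e1, e2]
    ring
  rw [hB, hB', hC, hC', hD] at hsum
  rw [Finset.sum_mul]
  linarith
end
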